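/- Let n ≥ 1 and 1 ≤ m ≤ n, let s ≥ m, and let μ_{2n,m} be the unique U(n)-invariant Borel probability measure on G_h(2n,m). For every R > 0 there exists a constant C = C(R,n,m,s) > 0 such that for every Borel set A ⊆ ℝ^{2n} the double upper integral satisfies ∫_{ℝ^{2n}} ∫_{G_h(2n,m)} H^{s−m}[A ∩ (V^⊥ + x)] · 1_{N(V,R)}(x) dμ_{2n,m}(V) dx ≤ C H^s(A), where N(V,R) = {y ∈ ℝ^{2n} : dist(y,V) ≤ R} is the Euclidean R-neighborhood of V and dx is Lebesgue measure on ℝ^{2n}. -/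

import Mathlib

open MeasureTheory Module Metric Set
open scoped ENNReal NNReal Real

noncomputable section

/-- Euclidean space `ℝ^{2n}`. -/
abbrev E (n : ℕ) : Type := EuclideanSpace ℝ (Fin (2 * n))

/-- The standard symplectic form `ω((x,y),(u,v)) = x·v − y·u` on `ℝ^{2n}`. -/
def symp (n : ℕ) (x y : E n) : ℝ :=
  ∑ i : Fin n, (x ⟨i.1, by have := i.2; omega⟩ * y ⟨i.1 + n, by have := i.2; omega⟩ -
    x ⟨i.1 + n, by have := i.2; omega⟩ * y ⟨i.1, by have := i.2; omega⟩)

/-- A linear subspace of `ℝ^{2n}` is isotropic if the symplectic form vanishes on it. -/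
def IsIsotropic (n : ℕ) (V : Submodule ℝ (E n)) : Prop :=
  ∀ v ∈ V, ∀ w ∈ V, symp n v w = 0

/-- The orthogonal projection onto a subspace, as a continuous linear endomorphism. -/
def projCLM (n : ℕ) (V : Submodule ℝ (E n)) : E n →L[ℝ] E n :=
  V.subtypeL.comp V.orthogonalProjectionOnto

/-- The isotropic Grassmannian `G_h(2n,m)`, realized as the set of orthogonal projection
operators onto `m`-dimensional isotropic subspaces, inside the continuous linear
endomorphisms of `ℝ^{2n}`.  For `P` in this set, the corresponding plane `V` is
`LinearMap.range P` and the orthogonal projection `P_V` is `P` itself. -/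
def grass (n m : ℕ) : Set (E n →L[ℝ] E n) :=
  {P | ∃ V : Submodule ℝ (E n), IsIsotropic n V ∧ finrank ℝ V = m ∧ P = projCLM n V}

/-- Membership in `U(n)`: a linear isometry of `ℝ^{2n}` preserving the symplectic form. -/
def IsUnitary (n : ℕ) (g : E n ≃ₗᵢ[ℝ] E n) : Prop :=
  ∀ x y, symp n (g x) (g y) = symp n x y

/-- The action of an isometry on projection operators: `P ↦ g ∘ P ∘ g⁻¹`. -/
def conjAct (n : ℕ) (g : E n ≃ₗᵢ[ℝ] E n) (P : E n →L[ℝ] E n) : E n →L[ℝ] E n :=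
  (g.toLinearIsometry.toContinuousLinearMap.comp P).comp
    g.symm.toLinearIsometry.toContinuousLinearMap

/-- `ν` is a `U(n)`-invariant Borel probability measure `μ_{2n,m}` on `G_h(2n,m)`:
a Borel measure on the space of operators giving full mass to the isotropic
Grassmannian and invariant under the conjugation action of the unitary group.
(Probability is imposed via an `IsProbabilityMeasure` instance.) -/
def IsGrassMeasure (n m : ℕ) (ν : Measure (E n →L[ℝ] E n)) : Prop :=
  ν (grass n m) = 1 ∧
    ∀ g : E n ≃ₗᵢ[ℝ] E n, IsUnitary n g → Measure.map (conjAct n g) ν = ν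

/-!
Cover `A` by closed sets `T i` of small diameter with `∑ diam (T i) ^ s` close to `H^s(A)`.
For a plane `V` and a point `x` with `dist(x, V) ≤ R`, the slice `A ∩ (V^⊥ + x)` is covered by
the pieces `T i ∩ (V^⊥ + x)` that are nonempty, each of diameter at most `diam (T i)`. The piece
`T i` meets `V^⊥ + x` only if `P_V x ∈ P_V (T i)`, and the set of such `x` with `dist(x, V) ≤ R`
lies in a box of volume `(2 diam (T i)) ^ m (2R) ^ (2n - m)`. Integrating the indicators of these
tubes over `x` and `V` (Fatou and Tonelli) bounds the double integral by
`∑ diam (T i) ^ (s - m) · 2 ^ m (2R) ^ (2n - m) diam (T i) ^ m = C ∑ diam (T i) ^ s`.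
-/

open Filter
open scoped Topology RealInnerProductSpace

theorem exists_isClosed_cover_tsum_le_hausdorffMeasure_add {X : Type*} [EMetricSpace X]
    [MeasurableSpace X] [BorelSpace X] {d : ℝ} {A : Set X} (hA : μH[d] A ≠ ∞) {r ε : ℝ≥0∞}
    (hr : 0 < r) (hε : ε ≠ 0) :
    ∃ T : ℕ → Set X, A ⊆ ⋃ i, T i ∧ (∀ i, IsClosed (T i)) ∧ (∀ i, ediam (T i) ≤ r) ∧
      ∑' i, ⨆ _ : (T i).Nonempty, ediam (T i) ^ d ≤ μH[d] A + ε := by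
  have hlt : (⨅ (t : ℕ → Set X) (_ : A ⊆ ⋃ i, t i) (_ : ∀ i, ediam (t i) ≤ r),
      ∑' i, ⨆ _ : (t i).Nonempty, ediam (t i) ^ d) < μH[d] A + ε := by
    refine lt_of_le_of_lt ?_ (ENNReal.lt_add_right hA hε)
    rw [Measure.hausdorffMeasure_apply]
    exact le_iSup₂ (f := fun r (_ : 0 < r) => ⨅ (t : ℕ → Set X) (_ : A ⊆ ⋃ i, t i)
      (_ : ∀ i, ediam (t i) ≤ r), ∑' i, ⨆ _ : (t i).Nonempty, ediam (t i) ^ d) r hr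
  simp only [iInf_lt_iff] at hlt
  obtain ⟨t, hcov, hdiam, hsum⟩ := hlt
  refine ⟨fun i => closure (t i), hcov.trans (iUnion_mono fun i => subset_closure),
    fun i => isClosed_closure, fun i => (ediam_closure _).trans_le (hdiam i), ?_⟩
  simpa only [ediam_closure, closure_nonempty_iff] using hsum.le

section ProjTube

variable {F : Type*} [NormedAddCommGroup F] [NormedSpace ℝ F]

/-- For `P` the orthogonal projection onto `V`, `(x, P) ∈ projTube t R` iff the affine plane
`V^⊥ + x` meets `t` and `dist(x, V) ≤ R`. -/
def projTube (t : Set F) (R : ℝ) : Set (F × (F →L[ℝ] F)) :=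
  {p | p.2 p.1 ∈ p.2 '' t ∧ ‖p.1 - p.2 p.1‖ ≤ R}

@[simp]
theorem projTube_empty (R : ℝ) : projTube (∅ : Set F) R = ∅ := by
  simp [projTube]

theorem IsCompact.isClosed_projTube {t : Set F} (ht : IsCompact t) (R : ℝ) :
    IsClosed (projTube t R) := by
  have : CompactSpace t := isCompact_iff_compactSpace.1 ht
  have hfib : IsClosed (Prod.fst '' {q : (F × (F →L[ℝ] F)) × t | q.1.2 q.2 = q.1.2 q.1.1}) :=
    isClosedMap_fst_of_compactSpace _ (isClosed_eq (by fun_prop) (by fun_prop))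
  have heq : projTube t R = (Prod.fst '' {q : (F × (F →L[ℝ] F)) × t | q.1.2 q.2 = q.1.2 q.1.1}) ∩
      {p | ‖p.1 - p.2 p.1‖ ≤ R} := by
    ext ⟨x, P⟩
    simp [projTube]
  rw [heq]
  exact hfib.inter (isClosed_le (by fun_prop) continuous_const)

end ProjTube

section InnerProductSpace

variable {F : Type*} [NormedAddCommGroup F] [InnerProductSpace ℝ F]

theorem Submodule.infDist_eq_norm_sub_starProjection (K : Submodule ℝ F)
    [K.HasOrthogonalProjection] (x : F) : infDist x K = ‖x - K.starProjection x‖ := by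
  rw [starProjection_minimal, infDist_eq_iInf]
  simp_rw [dist_eq_norm]
  rfl

theorem Submodule.inner_eq_inner_starProjection {K : Submodule ℝ F} [K.HasOrthogonalProjection]
    {u : F} (hu : u ∈ K) (z : F) :
    ⟪u, z⟫ = ⟪u, K.starProjection z⟫ := by
  rw [← inner_starProjection_left_eq_right, starProjection_eq_self_iff.2 hu]

theorem Submodule.inner_eq_inner_sub_starProjection {K : Submodule ℝ F} [K.HasOrthogonalProjection]
    {u : F} (hu : u ∈ Kᗮ) (z : F) :
    ⟪u, z⟫ = ⟪u, z - K.starProjection z⟫ := by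
  rw [inner_sub_right, inner_left_of_mem_orthogonal (K.starProjection_apply_mem z) hu, sub_zero]

theorem Submodule.mk_starProjection_mem_projTube (K : Submodule ℝ F) [K.HasOrthogonalProjection]
    {t : Set F} {x y : F} (hy : y ∈ t) (hyx : y - x ∈ Kᗮ) {R : ℝ} (hx : infDist x K ≤ R) :
    (x, K.starProjection) ∈ projTube t R :=
  ⟨⟨y, hy, by rwa [← sub_eq_zero, ← map_sub, starProjection_apply_eq_zero_iff]⟩,
    (K.infDist_eq_norm_sub_starProjection x).symm.trans_le hx⟩

theorem Submodule.exists_orthonormalBasis_sigma_cond [FiniteDimensional ℝ F] (K : Submodule ℝ F) :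
    ∃ b : OrthonormalBasis (Σ β : Bool, Fin (finrank ℝ ↥(cond β K Kᗮ))) ℝ F,
      ∀ a, b a ∈ cond a.1 K Kᗮ := by
  have hint : DirectSum.IsInternal fun β : Bool => cond β K Kᗮ :=
    (DirectSum.isInternal_submodule_iff_isCompl (fun β : Bool => cond β K Kᗮ) (i := true)
      (j := false) (by decide) (Set.ext fun β => by cases β <;> simp)).2 K.isCompl_orthogonal
  exact ⟨_, hint.collectedOrthonormalBasis_mem K.orthogonalFamily_self
    fun β => stdOrthonormalBasis ℝ ↥(cond β K Kᗮ)⟩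

variable [MeasurableSpace F] [BorelSpace F]

theorem Submodule.hausdorffMeasure_inter_orthogonal_le_liminf (K : Submodule ℝ F)
    [K.HasOrthogonalProjection] {A : Set F}
    {T : ℕ → ℕ → Set F} (hcov : ∀ k, A ⊆ ⋃ i, T k i)
    (hdiam : ∀ k i, ediam (T k i) ≤ ((k + 1 : ℕ) : ℝ≥0∞)⁻¹) {d : ℝ} (hd : 0 ≤ d) {R : ℝ}
    {x : F} (hx : infDist x K ≤ R) :
    μH[d] (A ∩ {y | y - x ∈ Kᗮ}) ≤ liminf (fun k => ∑' i,
      (projTube (T k i) R).indicator (fun _ => ediam (T k i) ^ d) (x, K.starProjection)) atTop := by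
  set L := {y | y - x ∈ Kᗮ}
  have hr : Tendsto (fun k : ℕ => ((k + 1 : ℕ) : ℝ≥0∞)⁻¹) atTop (𝓝 0) :=
    ENNReal.tendsto_inv_nat_nhds_zero.comp (tendsto_add_atTop_nat 1)
  refine (Measure.hausdorffMeasure_le_liminf_tsum d (A ∩ L) _ hr
    (fun k (i : {i // (T k i ∩ L).Nonempty}) => T k i ∩ L)
    (Eventually.of_forall fun k i => (ediam_mono inter_subset_left).trans (hdiam k i))
    (Eventually.of_forall fun k => ?_)).trans
    (liminf_le_liminf (Eventually.of_forall fun k => ?_))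
  · rintro y ⟨hyA, hyL⟩
    obtain ⟨i, hi⟩ := mem_iUnion.1 (hcov k hyA)
    exact mem_iUnion.2 ⟨⟨i, y, hi, hyL⟩, hi, hyL⟩
  · refine (ENNReal.tsum_le_tsum fun i => ?_).trans
      (ENNReal.tsum_comp_le_tsum_of_injective Subtype.val_injective _)
    obtain ⟨y, hyT, hyL⟩ := i.2
    rw [indicator_of_mem (K.mk_starProjection_mem_projTube hyT hyL hx)]
    exact ENNReal.rpow_le_rpow (ediam_mono inter_subset_left) hd

variable [FiniteDimensional ℝ F]

theorem OrthonormalBasis.volume_setOf_abs_inner_sub_le {ι : Type*} [Fintype ι]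
    (b : OrthonormalBasis ι ℝ F) (c : F) (r : ι → ℝ) :
    volume {x : F | ∀ i, |⟪b i, x - c⟫| ≤ r i} = ∏ i, ENNReal.ofReal (2 * r i) := by
  have hbox : {x : F | ∀ i, |⟪b i, x - c⟫| ≤ r i} =
      (fun x => (MeasurableEquiv.toLp 2 (ι → ℝ)).symm (b.repr (x - c))) ⁻¹'
        univ.pi fun i => Icc (-r i) (r i) := by
    ext x
    simp only [mem_preimage, mem_univ_pi, mem_Icc, abs_le, ← b.repr_apply_apply]
    rfl
  have hmp : MeasurePreserving (fun x => (MeasurableEquiv.toLp 2 (ι → ℝ)).symm (b.repr (x - c))) :=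
    ((EuclideanSpace.volume_preserving_symm_measurableEquiv_toLp ι).comp
      b.measurePreserving_repr).comp (measurePreserving_sub_right volume c)
  rw [hbox, hmp.measure_preimage
    (MeasurableSet.univ_pi fun _ => measurableSet_Icc).nullMeasurableSet, volume_pi_pi]
  simp only [Real.volume_Icc]
  congr 1 with i
  ring_nf

theorem Submodule.volume_projTube_le (K : Submodule ℝ F) {t : Set F} (ht : Bornology.IsBounded t)
    (R : ℝ) :
    volume ((fun x => (x, K.starProjection)) ⁻¹' projTube t R) ≤
      (2 * ediam t) ^ finrank ℝ K * ENNReal.ofReal (2 * R) ^ finrank ℝ Kᗮ := by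
  rcases t.eq_empty_or_nonempty with rfl | ⟨y₀, hy₀⟩
  · simp
  obtain ⟨b, hb⟩ := K.exists_orthonormalBasis_sigma_cond
  have hsub : (fun x => (x, K.starProjection)) ⁻¹' projTube t R ⊆
      {x | ∀ a, |⟪b a, x - K.starProjection y₀⟫| ≤ cond a.1 (diam t) R} := by
    rintro x ⟨⟨y, hy, hxy : K.starProjection y = K.starProjection x⟩,
      hxR : ‖x - K.starProjection x‖ ≤ R⟩ ⟨_ | _, j⟩
    · have hbj : b ⟨false, j⟩ ∈ Kᗮ := hb ⟨false, j⟩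
      calc |⟪b ⟨false, j⟩, x - K.starProjection y₀⟫|
          = |⟪b ⟨false, j⟩, x - K.starProjection x⟫| := by
            rw [inner_eq_inner_sub_starProjection hbj, map_sub,
              K.starProjection_eq_self_iff.2 (K.starProjection_apply_mem y₀),
              sub_sub_sub_cancel_right]
        _ ≤ ‖x - K.starProjection x‖ := by
            simpa [b.orthonormal.1] using abs_real_inner_le_norm (b _) (x - K.starProjection x)
        _ ≤ R := hxR
    · have hbj : b ⟨true, j⟩ ∈ K := hb ⟨true, j⟩
      calc |⟪b ⟨true, j⟩, x - K.starProjection y₀⟫|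
          = |⟪b ⟨true, j⟩, K.starProjection (y - y₀)⟫| := by
            rw [inner_eq_inner_starProjection hbj, map_sub, map_sub, hxy,
              K.starProjection_eq_self_iff.2 (K.starProjection_apply_mem y₀)]
        _ ≤ ‖K.starProjection (y - y₀)‖ := by
            simpa [b.orthonormal.1] using abs_real_inner_le_norm (b _) (K.starProjection (y - y₀))
        _ ≤ ‖y - y₀‖ := K.norm_starProjection_apply_le _
        _ ≤ diam t := by rw [← dist_eq_norm]; exact dist_le_diam_of_mem ht hy hy₀
  calc volume ((fun x => (x, K.starProjection)) ⁻¹' projTube t R)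
      ≤ ∏ a : Σ β : Bool, Fin (finrank ℝ ↥(cond β K Kᗮ)),
          ENNReal.ofReal (2 * cond a.1 (diam t) R) :=
        (measure_mono hsub).trans_eq (b.volume_setOf_abs_inner_sub_le _ _)
    _ = ENNReal.ofReal (2 * diam t) ^ finrank ℝ K * ENNReal.ofReal (2 * R) ^ finrank ℝ Kᗮ := by
        simp [Fintype.prod_sigma]
    _ ≤ (2 * ediam t) ^ finrank ℝ K * ENNReal.ofReal (2 * R) ^ finrank ℝ Kᗮ := by
        gcongr
        rw [ENNReal.ofReal_mul zero_le_two, ENNReal.ofReal_ofNat]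
        gcongr
        exact ENNReal.ofReal_toReal_le

variable {m : ℕ} {G : Set (F →L[ℝ] F)}

theorem prod_restrict_projTube_le
    (hG : ∀ P ∈ G, ∃ K : Submodule ℝ F, finrank ℝ K = m ∧ P = K.starProjection)
    (ν : Measure (F →L[ℝ] F)) [SFinite ν] {t : Set F} (ht : IsCompact t) (R : ℝ) :
    (volume.prod (ν.restrict G)) (projTube t R) ≤
      (2 * ediam t) ^ m * ENNReal.ofReal (2 * R) ^ (finrank ℝ F - m) * ν G := by
  rw [Measure.prod_apply_symm (ht.isClosed_projTube R).measurableSet, ← setLIntegral_const]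
  refine setLIntegral_mono measurable_const fun P hP => ?_
  obtain ⟨K, rfl, rfl⟩ := hG P hP
  have hrank := K.finrank_add_finrank_orthogonal
  rw [show finrank ℝ F - finrank ℝ K = finrank ℝ Kᗮ by omega]
  exact K.volume_projTube_le ht.isBounded R

theorem ediam_rpow_mul_prod_restrict_projTube_le
    (hG : ∀ P ∈ G, ∃ K : Submodule ℝ F, finrank ℝ K = m ∧ P = K.starProjection)
    (ν : Measure (F →L[ℝ] F)) [SFinite ν] {t : Set F} (ht : IsCompact t) (R : ℝ) {s : ℝ}
    (hs : (m : ℝ) ≤ s) :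
    ediam t ^ (s - m) * (volume.prod (ν.restrict G)) (projTube t R) ≤
      2 ^ m * ENNReal.ofReal (2 * R) ^ (finrank ℝ F - m) * ν G * ⨆ _ : t.Nonempty, ediam t ^ s := by
  rcases t.eq_empty_or_nonempty with rfl | ht₀
  · simp
  have hpow : ediam t ^ (s - m) * ediam t ^ m = ediam t ^ s := by
    rw [← ENNReal.rpow_natCast, ← ENNReal.rpow_add_of_nonneg _ _ (sub_nonneg.2 hs) m.cast_nonneg,
      sub_add_cancel]
  calc ediam t ^ (s - m) * (volume.prod (ν.restrict G)) (projTube t R)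
      ≤ ediam t ^ (s - m) *
          ((2 * ediam t) ^ m * ENNReal.ofReal (2 * R) ^ (finrank ℝ F - m) * ν G) := by
        gcongr
        exact prod_restrict_projTube_le hG ν ht R
    _ = 2 ^ m * ENNReal.ofReal (2 * R) ^ (finrank ℝ F - m) * ν G *
          ⨆ _ : t.Nonempty, ediam t ^ s := by
        rw [iSup_pos ht₀, mul_pow, ← hpow]
        ring

def sliceMass (s R : ℝ) (A : Set F) (x : F) (P : F →L[ℝ] F) : ℝ≥0∞ :=
  if infDist x (LinearMap.range (P : F →ₗ[ℝ] F) : Set F) ≤ R then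
    μH[s] (A ∩ {y : F | y - x ∈ (LinearMap.range (P : F →ₗ[ℝ] F))ᗮ}) else 0

theorem lintegral_setLIntegral_sliceMass_le_liminf
    (hG : ∀ P ∈ G, ∃ K : Submodule ℝ F, finrank ℝ K = m ∧ P = K.starProjection)
    (ν : Measure (F →L[ℝ] F)) [SFinite ν] {s : ℝ} (hs : (m : ℝ) ≤ s) (R : ℝ) (A : Set F)
    {T : ℕ → ℕ → Set F} (hcov : ∀ k, A ⊆ ⋃ i, T k i) (hcpt : ∀ k i, IsCompact (T k i))
    (hdiam : ∀ k i, ediam (T k i) ≤ ((k + 1 : ℕ) : ℝ≥0∞)⁻¹) :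
    ∫⁻ x, ∫⁻ P in G, sliceMass (s - m) R A x P ∂ν ≤
      liminf (fun k => 2 ^ m * ENNReal.ofReal (2 * R) ^ (finrank ℝ F - m) * ν G *
        ∑' i, ⨆ _ : (T k i).Nonempty, ediam (T k i) ^ s) atTop := by
  set μ : Measure (F × (F →L[ℝ] F)) := volume.prod (ν.restrict G)
  set g : ℕ → F × (F →L[ℝ] F) → ℝ≥0∞ := fun k p =>
    ∑' i, (projTube (T k i) R).indicator (fun _ => ediam (T k i) ^ (s - m)) p
  have hS : ∀ k i, MeasurableSet (projTube (T k i) R) := fun k i =>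
    ((hcpt k i).isClosed_projTube R).measurableSet
  have hg : ∀ k, Measurable (g k) := fun k =>
    Measurable.tsum fun i => measurable_const.indicator (hS k i)
  have hslice : ∀ x, ∀ P ∈ G, sliceMass (s - m) R A x P ≤ liminf (fun k => g k (x, P)) atTop := by
    intro x P hP
    obtain ⟨K, -, rfl⟩ := hG P hP
    rw [sliceMass, K.range_starProjection]
    split_ifs with hx
    · exact K.hausdorffMeasure_inter_orthogonal_le_liminf hcov hdiam (sub_nonneg.2 hs) hx
    · exact zero_le
  have hg_lintegral : ∀ k, ∫⁻ p, g k p ∂μ = ∑' i, ediam (T k i) ^ (s - m) * μ (projTube (T k i) R) := by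
    intro k
    rw [lintegral_tsum fun i => (measurable_const.indicator (hS k i)).aemeasurable]
    simp_rw [lintegral_indicator_const (hS k _)]
  calc _ ≤ ∫⁻ x, ∫⁻ P, liminf (fun k => g k (x, P)) atTop ∂ν.restrict G :=
        lintegral_mono fun x => setLIntegral_mono
          ((Measurable.liminf hg).comp measurable_prodMk_left) (hslice x)
    _ = ∫⁻ p, liminf (fun k => g k p) atTop ∂μ :=
        (lintegral_prod _ (Measurable.liminf hg).aemeasurable).symm
    _ ≤ liminf (fun k => ∫⁻ p, g k p ∂μ) atTop := lintegral_liminf_le hg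
    _ ≤ _ := by
        refine liminf_le_liminf (Eventually.of_forall fun k => ?_)
        rw [hg_lintegral, ← ENNReal.tsum_mul_left]
        exact ENNReal.tsum_le_tsum fun i =>
          ediam_rpow_mul_prod_restrict_projTube_le hG ν (hcpt k i) R hs

theorem lintegral_setLIntegral_sliceMass_le
    (hG : ∀ P ∈ G, ∃ K : Submodule ℝ F, finrank ℝ K = m ∧ P = K.starProjection)
    (ν : Measure (F →L[ℝ] F)) [IsFiniteMeasure ν] {s : ℝ} (hs : (m : ℝ) ≤ s) {R : ℝ}
    (hR : 0 < R) (A : Set F) :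
    ∫⁻ x, ∫⁻ P in G, sliceMass (s - m) R A x P ∂ν ≤
      2 ^ m * ENNReal.ofReal (2 * R) ^ (finrank ℝ F - m) * ν G * μH[s] A := by
  set c := 2 ^ m * ENNReal.ofReal (2 * R) ^ (finrank ℝ F - m) * ν G
  rcases eq_or_ne (ν G) 0 with hνG | hνG
  · simp [Measure.restrict_eq_zero.2 hνG]
  rcases eq_or_ne (μH[s] A) ∞ with hA | hA
  · have hc : c ≠ 0 := by simp [c, hνG, not_le.2 hR]
    simp [hA, ENNReal.mul_top hc]
  set ε : ℕ → ℝ≥0∞ := fun k => ((k + 1 : ℕ) : ℝ≥0∞)⁻¹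
  have hε : ∀ k, 0 < ε k := fun k => ENNReal.inv_pos.2 (ENNReal.natCast_ne_top _)
  have hε₀ : Tendsto ε atTop (𝓝 0) :=
    ENNReal.tendsto_inv_nat_nhds_zero.comp (tendsto_add_atTop_nat 1)
  choose T hTcov hTclosed hTdiam hTsum using fun k =>
    exists_isClosed_cover_tsum_le_hausdorffMeasure_add hA (hε k) (hε k).ne'
  have hTcpt : ∀ k i, IsCompact (T k i) := fun k i =>
    isCompact_of_isClosed_isBounded (hTclosed k i) (isBounded_iff_ediam_ne_top.2
      ((hTdiam k i).trans_lt (ENNReal.inv_lt_top.2 (by positivity))).ne)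
  have hlim : Tendsto (fun k => c * (μH[s] A + ε k)) atTop (𝓝 (c * μH[s] A)) := by
    have hc : c ≠ ∞ := by simp [c, ENNReal.mul_eq_top, measure_ne_top]
    simpa only [add_zero] using
      ENNReal.Tendsto.const_mul (tendsto_const_nhds.add hε₀) (Or.inr hc)
  calc _ ≤ liminf (fun k => c * ∑' i, ⨆ _ : (T k i).Nonempty, ediam (T k i) ^ s) atTop :=
        lintegral_setLIntegral_sliceMass_le_liminf hG ν hs R A hTcov hTcpt hTdiam
    _ ≤ liminf (fun k => c * (μH[s] A + ε k)) atTop :=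
        liminf_le_liminf (Eventually.of_forall fun k => mul_le_mul_right (hTsum k) c)
    _ = c * μH[s] A := hlim.liminf_eq

end InnerProductSpace

theorem stmt12_general (n m : ℕ) (s : ℝ) (hs : (m : ℝ) ≤ s)
    (ν : Measure (E n →L[ℝ] E n)) [IsProbabilityMeasure ν]
    (R : ℝ) (hR : 0 < R) :
    ∃ C : ℝ, 0 < C ∧ ∀ A : Set (E n), MeasurableSet A →
      ∫⁻ x, (∫⁻ P in grass n m,
          (if Metric.infDist x (LinearMap.range (P : E n →ₗ[ℝ] E n) : Set (E n)) ≤ R then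
            μH[s - m] (A ∩ {y : E n | y - x ∈ (LinearMap.range (P : E n →ₗ[ℝ] E n))ᗮ}) else 0) ∂ν)
        ≤ ENNReal.ofReal C * μH[s] A := by
  refine ⟨2 ^ m * (2 * R) ^ (2 * n - m), by positivity, fun A _ => ?_⟩
  have hgrass : ∀ P ∈ grass n m, ∃ V : Submodule ℝ (E n), finrank ℝ V = m ∧ P = V.starProjection :=
    fun P ⟨V, _, hV, hP⟩ => ⟨V, hV, hP⟩
  calc _ ≤ 2 ^ m * ENNReal.ofReal (2 * R) ^ (finrank ℝ (E n) - m) * ν (grass n m) * μH[s] A :=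
        lintegral_setLIntegral_sliceMass_le hgrass ν hs hR A
    _ ≤ ENNReal.ofReal (2 ^ m * (2 * R) ^ (2 * n - m)) * μH[s] A := by
        rw [finrank_euclideanSpace_fin, ENNReal.ofReal_mul (p := 2 ^ m) (by positivity),
          ENNReal.ofReal_pow zero_le_two, ENNReal.ofReal_pow (by positivity), ENNReal.ofReal_ofNat]
        gcongr ?_ * _
        exact mul_le_of_le_one_right' prob_le_one

/-- For every `R > 0` there is `C = C(R,n,m,s) > 0` such that for every Borel `A ⊆ ℝ^{2n}`,
`∫_{ℝ^{2n}} ∫_{G_h(2n,m)} H^{s−m}[A ∩ (V^⊥ + x)]·1_{N(V,R)}(x) dμ_{2n,m}(V) dx ≤ C H^s(A)`,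
where `N(V,R)` is the Euclidean `R`-neighborhood of `V`. -/
theorem stmt12 (n m : ℕ) (hn : 1 ≤ n) (hm : 1 ≤ m) (hmn : m ≤ n)
    (s : ℝ) (hs : (m : ℝ) ≤ s)
    (ν : Measure (E n →L[ℝ] E n)) [IsProbabilityMeasure ν] (hν : IsGrassMeasure n m ν)
    (R : ℝ) (hR : 0 < R) :
    ∃ C : ℝ, 0 < C ∧ ∀ A : Set (E n), MeasurableSet A →
      ∫⁻ x, (∫⁻ P in grass n m,
          (if Metric.infDist x (LinearMap.range (P : E n →ₗ[ℝ] E n) : Set (E n)) ≤ R then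
            μH[s - m] (A ∩ {y : E n | y - x ∈ (LinearMap.range (P : E n →ₗ[ℝ] E n))ᗮ}) else 0) ∂ν)
        ≤ ENNReal.ofReal C * μH[s] A :=
  stmt12_general n m s hs ν R hR
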